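/- arXiv:1602.03700 — 4 statements merged into one kernel-verified Lean document; each statement's English description precedes it below -/
import Mathlib

section
/- Let R be a discrete valuation ring with uniformizer t, and let X be a flat R-scheme such that the special fibre X_k is reduced. Then for every affine open W of X, the ring O_X(W) is integrally closed in O_X(W)[t^{-1}]; in particular, if g ∈ O_X(W)[t^{-1}] satisfies a monic polynomial with coefficients in O_X(W), then g ∈ O_X(W). -/
/-!
Write `A = O_X(W)`. Flatness makes `t` a nonzerodivisor of `A`, and `A/tA = A ⊗_R k` is the ring
of the affine open `W_k` of the reduced special fibre, so `tA` is a radical ideal. Now let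
`g ∈ A[1/t]` be integral over `A`, say `t^n g = a ∈ A` with `n > 0`. Scaling the monic equation
of the integral element `t^(n-1) g` by `t` shows `a^d ∈ tA`, hence `a ∈ tA` and `t^(n-1) g ∈ A`;
descend to `n = 0`.
-/

universe u

open CategoryTheory Limits AlgebraicGeometry

def FlatOverBase (R : Type u) [CommRing R] (X : Scheme.{u})
    (f : X ⟶ Spec (CommRingCat.of R)) : Prop :=
  ∀ W : X.Opens, IsAffineOpen W →
    letI : Algebra R (X.presheaf.obj (Opposite.op W)) :=
      (((Scheme.ΓSpecIso (CommRingCat.of R)).inv ≫ f.appTop ≫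
        X.presheaf.map (homOfLE (le_top : W ≤ ⊤)).op) : CommRingCat.of R ⟶ _).hom.toAlgebra
    Module.Flat R (X.presheaf.obj (Opposite.op W))

open scoped nonZeroDivisors TensorProduct
open Polynomial

theorem pow_mem_span_singleton_of_isIntegral {A B : Type*} [CommRing A] [CommRing B]
    [Algebra A B] (hinj : Function.Injective (algebraMap A B)) {g : B} (hg : IsIntegral A g)
    {s a : A} (h : algebraMap A B s * g = algebraMap A B a) : ∃ n, a ^ n ∈ Ideal.span {s} := by
  obtain ⟨p, hp, hpg⟩ := hg
  have hroot : (p.scaleRoots s).IsRoot a := by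
    apply hinj
    rw [map_zero, ← eval₂_at_apply, ← h]
    exact scaleRoots_eval₂_eq_zero _ hpg
  exact ⟨_, (scaleRoots.isWeaklyEisensteinAt p (Ideal.mem_span_singleton_self s))
    |>.pow_natDegree_le_of_root_of_monic_mem hroot ((monic_scaleRoots_iff s).mpr hp) _ le_rfl⟩

theorem exists_algebraMap_eq_of_isIntegral_of_mul_eq {A B : Type*} [CommRing A] [CommRing B]
    [Algebra A B] (hinj : Function.Injective (algebraMap A B)) {τ : A}
    (hτ : IsLeftRegular (algebraMap A B τ)) (hrad : (Ideal.span {τ}).IsRadical)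
    {g : B} (hg : IsIntegral A g) {a : A} (h : algebraMap A B τ * g = algebraMap A B a) :
    ∃ b, algebraMap A B b = g := by
  obtain ⟨n, hn⟩ := pow_mem_span_singleton_of_isIntegral hinj hg h
  obtain ⟨b, rfl⟩ := Ideal.mem_span_singleton'.mp (hrad ⟨n, hn⟩)
  refine ⟨b, hτ ?_⟩
  simp only [h, map_mul, mul_comm]

theorem isIntegrallyClosedIn_localizationAway {A : Type*} [CommRing A] {τ : A} (hτ : τ ∈ A⁰)
    (hrad : (Ideal.span {τ}).IsRadical) : IsIntegrallyClosedIn A (Localization.Away τ) := by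
  have hinj : Function.Injective (algebraMap A (Localization.Away τ)) :=
    IsLocalization.injective _ (Submonoid.powers_le.mpr hτ)
  have hunit : IsUnit (algebraMap A (Localization.Away τ) τ) :=
    IsLocalization.Away.algebraMap_isUnit τ
  refine isIntegrallyClosedIn_iff.mpr ⟨hinj, fun {g} hg ↦ ?_⟩
  obtain ⟨n, a, h⟩ := IsLocalization.Away.surj τ g
  induction n generalizing g a with
  | zero => exact ⟨a, by simpa using h.symm⟩
  | succ n ih =>
    have hg' : IsIntegral A (g * algebraMap A _ τ ^ n) := hg.mul (isIntegral_algebraMap.pow n)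
    obtain ⟨b, hb⟩ := exists_algebraMap_eq_of_isIntegral_of_mul_eq hinj hunit.isRegular.left hrad
      hg' (by rw [← h, pow_succ]; ring)
    exact ih hg b hb.symm

theorem algebraMap_mem_nonZeroDivisors_of_flat {R A : Type*} [CommRing R] [CommRing A]
    [Algebra R A] [Module.Flat R A] {t : R} (ht : t ∈ R⁰) : algebraMap R A t ∈ A⁰ :=
  isRegular_iff_mem_nonZeroDivisors.mp ((Commute.isRegular_iff (Commute.all _)).mpr
    (IsSMulRegular.of_flat (Module.Flat.isSMulRegular_of_nonZeroDivisors ht)))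

theorem Ideal.isRadical_map_of_isReduced_tensorProduct_quotient {R A : Type*} [CommRing R]
    [CommRing A] [Algebra R A] (I : Ideal R) [IsReduced (A ⊗[R] (R ⧸ I))] :
    (I.map (algebraMap R A)).IsRadical :=
  (Ideal.isRadical_iff_quotient_reduced _).mpr
    (isReduced_of_injective _ (Algebra.TensorProduct.quotIdealMapEquivTensorQuot A I).injective)

namespace AlgebraicGeometry

variable {R : Type u} [CommRing R] {X : Scheme.{u}} (f : X ⟶ Spec (CommRingCat.of R))

noncomputable def Scheme.Hom.baseToSections (W : X.Opens) : CommRingCat.of R ⟶ Γ(X, W) :=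
  (Scheme.ΓSpecIso (CommRingCat.of R)).inv ≫ f.appTop ≫ X.presheaf.map (homOfLE le_top).op

theorem IsAffineOpen.fromSpec_comp_eq_specMap {W : X.Opens} (hW : IsAffineOpen W) :
    hW.fromSpec ≫ f = Spec.map (f.baseToSections W) := by
  rw [← IsAffineOpen.SpecMap_appLE_fromSpec f (isAffineOpen_top (Spec _)) hW le_top,
    IsAffineOpen.fromSpec_top (X := Spec _), Scheme.isoSpec_Spec_inv, ← Spec.map_comp]
  rfl

theorem IsAffineOpen.isReduced_tensorProduct_of_isReduced_pullback {W : X.Opens}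
    (hW : IsAffineOpen W) (S : Type u) [CommRing S] [Algebra R S]
    (hred : IsReduced (pullback f (Spec.map (CommRingCat.ofHom (algebraMap R S))))) :
    letI := (f.baseToSections W).hom.toAlgebra
    _root_.IsReduced (Γ(X, W) ⊗[R] S) := by
  let := (f.baseToSections W).hom.toAlgebra
  have := hred
  let g := Spec.map (CommRingCat.ofHom (algebraMap R S))
  let e : Spec (.of (Γ(X, W) ⊗[R] S)) ≅ pullback hW.fromSpec (pullback.fst f g) :=
    (pullbackSpecIso R Γ(X, W) S).symm ≪≫
      pullback.congrHom (hW.fromSpec_comp_eq_specMap f).symm rfl ≪≫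
      (pullbackRightPullbackFstIso f g hW.fromSpec).symm
  have : IsReduced (Spec (.of (Γ(X, W) ⊗[R] S))) :=
    isReduced_of_isOpenImmersion (e.hom ≫ pullback.snd _ _)
  exact (affine_isReduced_iff _).mp this

end AlgebraicGeometry

/-- Let `R` be a discrete valuation ring with uniformizer `t` and let
`X` be a flat `R`-scheme whose special fibre is reduced.  Then for every affine open
`W ⊆ X` the ring `O_X(W)` is integrally closed in `O_X(W)[t⁻¹]`: every element of the
localization away from (the image of) `t` that satisfies a monic polynomial with
coefficients in `O_X(W)` lies in `O_X(W)`. -/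
theorem statement2 (R : Type u) [CommRing R] [IsDomain R] [IsDiscreteValuationRing R]
    (t : R) (ht : Irreducible t)
    (X : Scheme.{u}) (f : X ⟶ Spec (CommRingCat.of R))
    (hflat : FlatOverBase R X f)
    (hred : IsReduced (pullback f
      (Spec.map (CommRingCat.ofHom (IsLocalRing.residue R)))))
    (W : X.Opens) (hW : IsAffineOpen W) :
    ∀ g : Localization.Away
        ((((Scheme.ΓSpecIso (CommRingCat.of R)).inv ≫ f.appTop ≫
          X.presheaf.map (homOfLE (le_top : W ≤ ⊤)).op) :
            CommRingCat.of R ⟶ X.presheaf.obj (Opposite.op W)) t),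
      IsIntegral (X.presheaf.obj (Opposite.op W)) g →
        ∃ a : X.presheaf.obj (Opposite.op W),
          algebraMap (X.presheaf.obj (Opposite.op W)) _ a = g := by
  let := (f.baseToSections W).hom.toAlgebra
  have : Module.Flat R Γ(X, W) := hflat W hW
  have hregular : algebraMap R Γ(X, W) t ∈ Γ(X, W)⁰ :=
    algebraMap_mem_nonZeroDivisors_of_flat (mem_nonZeroDivisors_of_ne_zero ht.ne_zero)
  have : _root_.IsReduced (Γ(X, W) ⊗[R] (R ⧸ IsLocalRing.maximalIdeal R)) :=
    hW.isReduced_tensorProduct_of_isReduced_pullback f (IsLocalRing.ResidueField R) hred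
  have hradical : (Ideal.span {algebraMap R Γ(X, W) t}).IsRadical := by
    rw [← Set.image_singleton, ← Ideal.map_span, ← ht.maximalIdeal_eq]
    exact Ideal.isRadical_map_of_isReduced_tensorProduct_quotient _
  intro g hg
  exact (isIntegrallyClosedIn_localizationAway hregular hradical).isIntegral_iff.mp hg
end

section
/- Let A be a commutative ring in which an element t is not a zero divisor, and suppose A/tA is reduced. Then A is integrally closed in A[t^{-1}]. -/
/-!
If `z` is integral over `A` and `t z = a` with `a ∈ A`, then scaling the roots of a monic
equation of `z` by `t` shows `t ∣ a ^ d`; as `(t)` is a radical ideal, `t ∣ a`, so `z ∈ A`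
once `t` is inverted. Clearing one power of `t` at a time, every integral `x = a / t ^ n`
lies in `A`.
-/

open Polynomial

theorem dvd_of_isIntegral_of_algebraMap_mul_eq {A S : Type*} [CommRing A] [CommRing S]
    [Algebra A S] (hinj : Function.Injective (algebraMap A S)) {t : A}
    (hred : IsReduced (A ⧸ Ideal.span ({t} : Set A))) {z : S} (hz : IsIntegral A z) {a : A}
    (h : algebraMap A S t * z = algebraMap A S a) : t ∣ a := by
  obtain ⟨p, hmonic, hp⟩ := hz
  have hrad : (Ideal.span ({t} : Set A)).IsRadical :=
    (Ideal.isRadical_iff_quotient_reduced _).mpr hred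
  rw [← Ideal.mem_span_singleton]
  exact hrad ⟨p.natDegree, Ideal.mem_span_singleton.mpr
    (dvd_pow_natDegree_of_eval₂_eq_zero hinj hmonic t a z hp h)⟩

theorem IsLocalization.Away.exists_algebraMap_eq_of_isIntegral {A S : Type*} [CommRing A]
    [CommRing S] [Algebra A S] {t : A} [IsLocalization.Away t S] (ht : t ∈ nonZeroDivisors A)
    (hred : IsReduced (A ⧸ Ideal.span ({t} : Set A))) {x : S} (hx : IsIntegral A x) :
    ∃ b : A, algebraMap A S b = x := by
  have hinj : Function.Injective (algebraMap A S) :=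
    IsLocalization.injective S (Submonoid.powers_le.mpr ht)
  obtain ⟨n, a, hxa⟩ := IsLocalization.Away.surj t x
  induction n generalizing a with
  | zero => exact ⟨a, by simpa using hxa.symm⟩
  | succ n ih =>
    have hint : IsIntegral A (x * algebraMap A S t ^ n) :=
      hx.mul (isIntegral_algebraMap.pow n)
    obtain ⟨b, rfl⟩ := dvd_of_isIntegral_of_algebraMap_mul_eq hinj hred hint
      (by rw [← hxa, pow_succ]; ring)
    refine ih b ((IsLocalization.Away.algebraMap_isUnit t).mul_left_cancel ?_)
    rw [← map_mul, ← hxa, pow_succ]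
    ring

/-- Let `A` be a commutative ring, `t ∈ A` a non-zerodivisor such that
`A/tA` is reduced.  Then `A` is integrally closed in `A[t⁻¹]`: every element of the
localization of `A` away from `t` which is integral over `A` lies in (the image of) `A`. -/
theorem statement3 {A : Type*} [CommRing A] (t : A)
    (ht : t ∈ nonZeroDivisors A)
    (hred : IsReduced (A ⧸ Ideal.span ({t} : Set A))) :
    ∀ x : Localization.Away t, IsIntegral A x →
      ∃ a : A, algebraMap A (Localization.Away t) a = x :=
  fun _ hx => IsLocalization.Away.exists_algebraMap_eq_of_isIntegral ht hred hx
end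

section
/- Let (G,l) be a finite connected graph with edge labels in ℤ_{≥1}, with nullity r. The Smith normal form of the labelled circuit matrix M_{(G,l)} has all r nonzero diagonal entries equal to 1 if and only if (G,l) is circuit-coprime. -/
/-- A multigraph: vertices `V`, edges `E`, source/target maps (loops and multiple
edges allowed). -/
structure Multigraph (V E : Type*) where
  s : E → V
  t : E → V

namespace Multigraph

variable {V E : Type*} (G : Multigraph V E)

/-- The edge `e` has endpoints `a` and `b`. -/
def Connects (e : E) (a b : V) : Prop :=
  (G.s e = a ∧ G.t e = b) ∨ (G.s e = b ∧ G.t e = a)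

/-- Two vertices are connected by a walk using only edges from `F`. -/
def ReachableIn (F : Set E) : V → V → Prop :=
  Relation.ReflTransGen (fun a b => ∃ e ∈ F, G.Connects e a b)

/-- The graph is connected. -/
def Connected : Prop := ∀ a b : V, G.ReachableIn Set.univ a b

/-- The cyclic successor on `Fin m`. -/
def cyc {m : ℕ} (i : Fin m) : Fin m :=
  ⟨(i.1 + 1) % m, Nat.mod_lt _ (Nat.lt_of_le_of_lt (Nat.zero_le _) i.isLt)⟩

/-- A circuit: a closed walk with all edges and vertices distinct. -/
def IsCircuit {m : ℕ} (v : Fin m → V) (ed : Fin m → E) : Prop :=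
  0 < m ∧ Function.Injective v ∧ Function.Injective ed ∧
    ∀ i, G.Connects (ed i) (v i) (v (cyc i))

/-- A set of edges `F` is a spanning tree: the subgraph `(V, F)` is connected and has
no circuit. -/
def SpanningTree (F : Set E) : Prop :=
  (∀ a b : V, G.ReachableIn F a b) ∧
    ∀ (m : ℕ) (v : Fin m → V) (ed : Fin m → E),
      G.IsCircuit v ed → ¬ Set.range ed ⊆ F

/-- `(G, l)` is circuit-coprime: the labels of the edges of any circuit have gcd `1`. -/
def CircuitCoprime (l : E → ℕ) : Prop :=
  ∀ (m : ℕ) (v : Fin m → V) (ed : Fin m → E), G.IsCircuit v ed →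
    Finset.univ.gcd (fun i : Fin m => l (ed i)) = 1

/-- `x : E → ℤ` is the signed incidence (row) vector of an oriented circuit of `G`:
it takes the value `±1` on the edges of the circuit (according to whether the orientation of
the edge agrees with the travelling direction of the circuit) and `0` elsewhere. -/
def IsCircuitVector (x : E → ℤ) : Prop :=
  ∃ (m : ℕ) (v : Fin m → V) (ed : Fin m → E), G.IsCircuit v ed ∧
    (∀ i, (G.s (ed i) = v i ∧ G.t (ed i) = v (cyc i) ∧ x (ed i) = 1) ∨
        (G.s (ed i) = v (cyc i) ∧ G.t (ed i) = v i ∧ x (ed i) = -1)) ∧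
    ∀ e, e ∉ Set.range ed → x e = 0

end Multigraph

/-!
Circuit vectors span exactly the integer flows `ker ∂`: the support of a nonzero flow has no
vertex of degree one, so it contains a circuit, and subtracting a multiple of that circuit vector
shrinks the support. Hence the labelled circuit lattice is `L = {c · l | ∂c = 0}`, and
torsion-freeness of `ℤ^E ⧸ L` can be tested one prime at a time. If `p • z = c · l` with
`∂c = 0` and `p` does not divide every `c e`, then the edges where `c ≢ 0 mod p` again have no
vertex of degree one and contain a circuit, on which `p` divides every label; otherwise `c / p`
is a flow with `z = (c / p) · l`. Conversely, if a prime `p` divides all labels of a circuit with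
vector `x`, then `z = x · l / p` has `p • z ∈ L` but `z ∉ L`, since some entry of `z` is not a
multiple of the corresponding label.
-/

lemma exists_lt_eq_injOn_Iio {α : Type*} [Finite α] (f : ℕ → α) :
    ∃ i j, i < j ∧ f i = f j ∧ Set.InjOn f (Set.Iio j) := by
  classical
  have hrep : ∃ j, ∃ i < j, f i = f j := by
    obtain ⟨a, b, hab, h⟩ := Finite.exists_ne_map_eq_of_infinite f
    rcases hab.lt_or_gt with hlt | hlt
    exacts [⟨b, a, hlt, h⟩, ⟨a, b, hlt, h.symm⟩]
  obtain ⟨i, hi, hfi⟩ := Nat.find_spec hrep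
  refine ⟨i, Nat.find hrep, hi, hfi, fun a ha b hb hab => ?_⟩
  by_contra hne
  rcases Ne.lt_or_gt hne with h | h
  exacts [Nat.find_min hrep hb ⟨a, h, hab⟩, Nat.find_min hrep ha ⟨b, h, hab.symm⟩]

lemma torsion_int_eq_bot_iff {N : Type*} [AddCommGroup N] :
    Submodule.torsion ℤ N = ⊥ ↔ ∀ p : ℕ, p.Prime → ∀ x : N, (p : ℤ) • x = 0 → x = 0 := by
  refine ⟨fun h p hp x hx => ?_, fun h => ?_⟩
  · have hx : x ∈ Submodule.torsion ℤ N :=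
      ⟨⟨p, mem_nonZeroDivisors_of_ne_zero (by exact_mod_cast hp.ne_zero)⟩, hx⟩
    rwa [h, Submodule.mem_bot] at hx
  have hnat : ∀ n : ℕ, n ≠ 0 → ∀ x : N, (n : ℤ) • x = 0 → x = 0 := by
    intro n
    induction n using induction_on_primes with
    | zero => exact fun h0 => absurd rfl h0
    | one => exact fun _ x hx => by simpa using hx
    | prime_mul p n hp ih =>
      intro hpn x hx
      exact ih (right_ne_zero_of_mul hpn) x (h p hp _ (by rwa [smul_smul, ← Nat.cast_mul]))
  refine (Submodule.eq_bot_iff _).mpr fun x ⟨⟨a, ha⟩, hax⟩ =>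
    hnat a.natAbs (Int.natAbs_ne_zero.mpr (nonZeroDivisors.ne_zero ha)) x ?_
  change a • x = 0 at hax
  rw [Int.natCast_natAbs]
  rcases abs_choice a with h' | h' <;> simp [h', hax]

lemma torsion_quotient_int_eq_bot_iff {M : Type*} [AddCommGroup M] (L : Submodule ℤ M) :
    Submodule.torsion ℤ (M ⧸ L) = ⊥ ↔ ∀ p : ℕ, p.Prime → ∀ z : M, (p : ℤ) • z ∈ L → z ∈ L := by
  rw [torsion_int_eq_bot_iff]
  refine forall₂_congr fun p hp => ?_
  rw [(Submodule.Quotient.mk_surjective L).forall]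
  simp only [← Submodule.Quotient.mk_smul, Submodule.Quotient.mk_eq_zero]

namespace Multigraph

lemma cyc_eq_finRotate {m : ℕ} (i : Fin m) : cyc i = finRotate m i := by
  cases m with
  | zero => exact i.elim0
  | succ n =>
    ext
    rw [finRotate_apply, Fin.val_add, Fin.val_one', Nat.add_mod_mod]
    rfl

lemma cyc_bijective {m : ℕ} : Function.Bijective (cyc (m := m)) := by
  rw [funext cyc_eq_finRotate]
  exact (finRotate m).bijective

lemma val_cyc {m : ℕ} (i : Fin m) :
    ((cyc i).1 = i.1 + 1 ∧ i.1 + 1 < m) ∨ ((cyc i).1 = 0 ∧ i.1 + 1 = m) := by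
  have := i.isLt
  rcases Nat.lt_or_ge (i.1 + 1) m with h | h
  · exact Or.inl ⟨Nat.mod_eq_of_lt h, h⟩
  · have hm : i.1 + 1 = m := by omega
    exact Or.inr ⟨by simp [cyc, hm], hm⟩

lemma exists_closed_orbit {D α : Type*} [Finite α] (f : D → D) (σ : D → α) (d : D) :
    ∃ (m : ℕ) (dd : Fin m → D), 0 < m ∧ Function.Injective (σ ∘ dd) ∧
      (∀ i, σ (f (dd i)) = σ (dd (cyc i))) ∧
      ∀ i j : Fin m, j.1 = i.1 + 1 → dd j = f (dd i) := by
  obtain ⟨i, j, hij, hfij, hinj⟩ := exists_lt_eq_injOn_Iio (fun n => σ (f^[n] d))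
  refine ⟨j - i, fun k => f^[i + k] d, by omega, fun k k' h => ?_, fun k => ?_, fun k k' h => ?_⟩
  · have := hinj (by simp; omega) (by simp; omega) h
    ext; omega
  · simp only [← Function.iterate_succ_apply' f]
    rcases val_cyc k with ⟨h1, -⟩ | ⟨h1, h2⟩
    · rw [h1]; rfl
    · rw [h1, Nat.add_zero, Nat.succ_eq_add_one, add_assoc, h2, Nat.add_sub_cancel' hij.le]
      exact hfij.symm
  · simp only [h, ← add_assoc, Function.iterate_succ_apply']

variable {V E : Type*} (G : Multigraph V E)

/-- The dart `(e, false)` traverses `e` from `G.s e` to `G.t e`, and `(e, true)` backwards. -/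
def dartSrc (d : E × Bool) : V := if d.2 then G.t d.1 else G.s d.1

def dartTgt (d : E × Bool) : V := if d.2 then G.s d.1 else G.t d.1

lemma connects_dartSrc_dartTgt (d : E × Bool) : G.Connects d.1 (G.dartSrc d) (G.dartTgt d) := by
  rcases d with ⟨e, _ | _⟩ <;> simp [Connects, dartSrc, dartTgt]

lemma dartSrc_eq_or_of_fst_eq {d d' : E × Bool} (h : d.1 = d'.1) :
    G.dartSrc d = G.dartSrc d' ∨ (G.dartSrc d = G.dartTgt d' ∧ G.dartTgt d = G.dartSrc d') := by
  rcases d with ⟨e, _ | _⟩ <;> rcases d' with ⟨e', _ | _⟩ <;> simp_all [dartSrc, dartTgt]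

lemma exists_dartSrc_eq {e : E} {a : V} (h : G.s e = a ∨ G.t e = a) :
    ∃ b, G.dartSrc (e, b) = a := by
  rcases h with h | h
  exacts [⟨false, h⟩, ⟨true, h⟩]

/-- Following a successor rule on darts that never turns back along the same edge (except on
a loop) until a vertex repeats traces a circuit. -/
lemma exists_isCircuit_of_succ [Finite V] {D : Type*} (π : D → E × Bool) (f : D → D)
    (hf : ∀ d, G.dartSrc (π (f d)) = G.dartTgt (π d))
    (hf' : ∀ d, (π (f d)).1 = (π d).1 → G.dartSrc (π d) = G.dartTgt (π d)) (d : D) :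
    ∃ (m : ℕ) (v : Fin m → V) (dd : Fin m → D), G.IsCircuit v (fun i => (π (dd i)).1) := by
  obtain ⟨m, dd, hm, hinj, hcyc, hsucc⟩ := exists_closed_orbit f (fun d => G.dartSrc (π d)) d
  refine ⟨m, fun i => G.dartSrc (π (dd i)), dd, hm, hinj, fun k k' h => ?_, fun i => ?_⟩
  · by_contra hne
    wlog hlt : k < k' generalizing k k'
    · exact this k' k h.symm (Ne.symm hne) (lt_of_le_of_ne (not_lt.mp hlt) (Ne.symm hne))
    rcases G.dartSrc_eq_or_of_fst_eq h with hs | ⟨-, ht⟩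
    · exact hne (hinj hs)
    have hk' : cyc k = k' := hinj (by simp only [Function.comp_apply]; rw [← hcyc, hf, ht])
    have hkk' : k'.1 = k.1 + 1 := by
      rcases val_cyc k with ⟨h1, -⟩ | ⟨h1, -⟩ <;> rw [hk'] at h1 <;> omega
    have hloop := hf' (dd k) (by rw [← hsucc k k' hkk']; exact h.symm)
    exact hne (hinj (by simp only [Function.comp_apply]; rw [hloop, ht]))
  · dsimp only
    rw [← hcyc, hf]
    exact G.connects_dartSrc_dartTgt _

lemma exists_isCircuit_subset [Finite V] {S : Set E}
    (hS : ∀ e ∈ S, G.s e ≠ G.t e → ∀ a, G.s e = a ∨ G.t e = a →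
      ∃ e' ∈ S, e' ≠ e ∧ (G.s e' = a ∨ G.t e' = a))
    {e₀ : E} (he₀ : e₀ ∈ S) :
    ∃ (m : ℕ) (v : Fin m → V) (ed : Fin m → E), G.IsCircuit v ed ∧ ∀ i, ed i ∈ S := by
  have hsucc : ∀ d : {d : E × Bool // d.1 ∈ S}, ∃ d' : {d : E × Bool // d.1 ∈ S},
      G.dartSrc d'.1 = G.dartTgt d.1 ∧ (d'.1.1 = d.1.1 → G.dartSrc d.1 = G.dartTgt d.1) := by
    rintro ⟨d, hd⟩
    by_cases hloop : G.dartSrc d = G.dartTgt d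
    · exact ⟨⟨d, hd⟩, hloop, fun _ => hloop⟩
    have hne : G.s d.1 ≠ G.t d.1 := by
      rcases d with ⟨e, _ | _⟩ <;> simp_all [dartSrc, dartTgt, eq_comm]
    obtain ⟨e', he', hee', hend⟩ := hS d.1 hd hne (G.dartTgt d)
      (by rcases d with ⟨e, _ | _⟩ <;> simp [dartTgt])
    obtain ⟨b, hb⟩ := G.exists_dartSrc_eq hend
    exact ⟨⟨(e', b), he'⟩, hb, fun h => absurd h hee'⟩
  choose f hf hf' using hsucc
  obtain ⟨m, v, dd, hcirc⟩ :=
    G.exists_isCircuit_of_succ Subtype.val f hf hf' ⟨(e₀, false), he₀⟩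
  exact ⟨m, v, _, hcirc, fun i => (dd i).2⟩

lemma exists_isCircuitVector {m : ℕ} {v : Fin m → V} {ed : Fin m → E} (h : G.IsCircuit v ed) :
    ∃ x : E → ℤ, G.IsCircuitVector x ∧ (∀ i, x (ed i) = 1 ∨ x (ed i) = -1) ∧
      ∀ e, e ∉ Set.range ed → x e = 0 := by
  classical
  obtain ⟨hm, hv, hed, hconn⟩ := h
  set x : E → ℤ := Function.extend ed (fun i => if G.s (ed i) = v i then 1 else -1) 0
  have hx : ∀ i, x (ed i) = if G.s (ed i) = v i then 1 else -1 := hed.extend_apply _ _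
  have hsupp : ∀ e, e ∉ Set.range ed → x e = 0 := fun e he =>
    Function.extend_apply' _ _ _ (by simpa using he)
  refine ⟨x, ⟨m, v, ed, ⟨hm, hv, hed, hconn⟩, fun i => ?_, hsupp⟩,
    fun i => by rw [hx]; split_ifs <;> simp, hsupp⟩
  rw [hx]
  rcases hconn i with ⟨h1, h2⟩ | ⟨h1, h2⟩
  · exact Or.inl ⟨h1, h2, if_pos h1⟩
  · by_cases hs : G.s (ed i) = v i
    · exact Or.inl ⟨hs, by rw [h2, ← h1, hs], if_pos hs⟩
    · exact Or.inr ⟨h1, h2, if_neg hs⟩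

section Boundary

variable [DecidableEq V]

def incMatrix : Matrix V E ℤ :=
  fun a e => (if G.t e = a then 1 else 0) - (if G.s e = a then 1 else 0)

lemma incMatrix_eq_zero {e : E} {a : V} (hs : G.s e ≠ a) (ht : G.t e ≠ a) :
    G.incMatrix a e = 0 := by
  simp [incMatrix, hs, ht]

lemma isUnit_incMatrix {e : E} {a : V} (hloop : G.s e ≠ G.t e) (ha : G.s e = a ∨ G.t e = a) :
    IsUnit (G.incMatrix a e) := by
  rcases ha with rfl | rfl <;> simp [incMatrix, hloop, Ne.symm hloop]

variable [Fintype E]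

noncomputable def boundary : (E → ℤ) →ₗ[ℤ] V → ℤ := G.incMatrix.mulVecLin

lemma boundary_apply (x : E → ℤ) (a : V) : G.boundary x a = ∑ e, G.incMatrix a e * x e := rfl

lemma boundary_eq_zero_of_isCircuitVector {x : E → ℤ} (hx : G.IsCircuitVector x) :
    G.boundary x = 0 := by
  obtain ⟨m, v, ed, ⟨-, -, hed, -⟩, hsign, hsupp⟩ := hx
  ext a
  rw [boundary_apply, Pi.zero_apply, ← Fintype.sum_of_injective ed hed
    (fun i => (if v (cyc i) = a then 1 else 0) - (if v i = a then 1 else 0))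
    (fun e => G.incMatrix a e * x e) (fun e he => by rw [hsupp e he, mul_zero])
    (fun i => by rcases hsign i with ⟨h1, h2, h3⟩ | ⟨h1, h2, h3⟩ <;>
      simp only [incMatrix, h1, h2, h3] <;> ring),
    Finset.sum_sub_distrib, cyc_bijective.sum_comp (fun j => if v j = a then (1 : ℤ) else 0),
    sub_self]

lemma exists_isCircuit_not_dvd [Finite V] {c : E → ℤ} (hc : G.boundary c = 0) (n : ℤ)
    {e₀ : E} (h₀ : ¬ n ∣ c e₀) :
    ∃ (m : ℕ) (v : Fin m → V) (ed : Fin m → E), G.IsCircuit v ed ∧ ∀ i, ¬ n ∣ c (ed i) := by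
  classical
  refine G.exists_isCircuit_subset (S := {e | ¬ n ∣ c e}) (fun e he hloop a ha => ?_) h₀
  by_contra! hleaf
  have hrest : n ∣ ∑ e' ∈ Finset.univ.erase e, G.incMatrix a e' * c e' := by
    refine Finset.dvd_sum fun e' he' => ?_
    by_cases hdvd : n ∣ c e'
    · exact hdvd.mul_left _
    · obtain ⟨hs, ht⟩ := hleaf e' hdvd (Finset.ne_of_mem_erase he')
      rw [G.incMatrix_eq_zero hs ht, zero_mul]
      exact dvd_zero n
  have htotal : n ∣ G.boundary c a := by rw [hc]; exact dvd_zero n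
  rw [boundary_apply, ← Finset.add_sum_erase _ _ (Finset.mem_univ e)] at htotal
  exact he (((G.isUnit_incMatrix hloop ha).dvd_mul_left).mp ((dvd_add_left hrest).mp htotal))

lemma span_isCircuitVector_eq_ker [Finite V] :
    Submodule.span ℤ {x | G.IsCircuitVector x} = LinearMap.ker G.boundary := by
  refine le_antisymm (Submodule.span_le.mpr fun x hx => G.boundary_eq_zero_of_isCircuitVector hx)
    fun c hc => ?_
  induction hn : (Finset.univ.filter (c · ≠ 0)).card using Nat.strong_induction_on
    generalizing c with
  | _ n ih =>
  by_cases hzero : c = 0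
  · rw [hzero]; exact Submodule.zero_mem _
  obtain ⟨e₀, he₀⟩ := Function.ne_iff.mp hzero
  obtain ⟨m, v, ed, hcirc, hsupp⟩ :=
    G.exists_isCircuit_not_dvd (LinearMap.mem_ker.mp hc) 0 (by simpa using he₀)
  simp only [zero_dvd_iff] at hsupp
  obtain ⟨χ, hχ, hunit, hχsupp⟩ := G.exists_isCircuitVector hcirc
  set e₁ := ed ⟨0, hcirc.1⟩
  set c' := c - (c e₁ * χ e₁) • χ
  have hc'e₁ : c' e₁ = 0 := by
    have hχe₁ : χ e₁ * χ e₁ = 1 := by rcases hunit ⟨0, hcirc.1⟩ with h | h <;> simp [e₁, h]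
    simp [c', mul_assoc, hχe₁]
  have hc'supp : ∀ e, c e = 0 → c' e = 0 := fun e he => by
    have hχe : χ e = 0 := hχsupp e fun ⟨i, hi⟩ => hsupp i (hi ▸ he)
    simp [c', he, hχe]
  have hlt : (Finset.univ.filter (c' · ≠ 0)).card < n := by
    rw [← hn]
    refine Finset.card_lt_card ⟨fun e => by simpa using mt (hc'supp e), fun hsub => ?_⟩
    simpa [hc'e₁] using hsub (Finset.mem_filter.mpr ⟨Finset.mem_univ e₁, hsupp _⟩)
  have hc' : c' ∈ LinearMap.ker G.boundary :=
    sub_mem hc (Submodule.smul_mem _ _ (G.boundary_eq_zero_of_isCircuitVector hχ))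
  have := add_mem (ih _ hlt c' hc' rfl) (Submodule.smul_mem _ (c e₁ * χ e₁)
    (Submodule.subset_span hχ))
  simpa [c'] using this

noncomputable def labelledFlows (l : E → ℕ) : Submodule ℤ (E → ℤ) :=
  (LinearMap.ker G.boundary).map (LinearMap.mulRight ℤ fun e => (l e : ℤ))

lemma span_labelled_eq_labelledFlows [Finite V] (l : E → ℕ) :
    Submodule.span ℤ
        {y : E → ℤ | ∃ x : E → ℤ, G.IsCircuitVector x ∧ y = fun e => x e * (l e : ℤ)} =
      G.labelledFlows l := by
  rw [labelledFlows, ← span_isCircuitVector_eq_ker, Submodule.map_span]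
  congr 1
  ext y
  simp only [Set.mem_ofPred_eq, Set.mem_image, LinearMap.mulRight_apply]
  exact ⟨fun ⟨x, hx, hy⟩ => ⟨x, hx, hy.symm⟩, fun ⟨x, hx, hy⟩ => ⟨x, hx, hy.symm⟩⟩

lemma circuitCoprime_of_prime_smul_mem {l : E → ℕ} (hl : ∀ e, 1 ≤ l e)
    (hsat : ∀ p : ℕ, p.Prime → ∀ z : E → ℤ, (p : ℤ) • z ∈ G.labelledFlows l →
      z ∈ G.labelledFlows l) :
    G.CircuitCoprime l := by
  intro m v ed hcirc
  by_contra hg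
  obtain ⟨p, hp, hpg⟩ := Nat.exists_prime_and_dvd hg
  have hpl : ∀ i, p ∣ l (ed i) := fun i => hpg.trans (Finset.gcd_dvd (Finset.mem_univ i))
  obtain ⟨x, hx, hunit, hsupp⟩ := G.exists_isCircuitVector hcirc
  set z : E → ℤ := fun e => x e * ((l e / p : ℕ) : ℤ)
  have hpz : (p : ℤ) • z = LinearMap.mulRight ℤ (fun e => (l e : ℤ)) x := by
    funext e
    by_cases he : e ∈ Set.range ed
    · obtain ⟨i, rfl⟩ := he
      have hdiv : (p : ℤ) * ((l (ed i) / p : ℕ) : ℤ) = l (ed i) := by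
        rw [← Nat.cast_mul, Nat.mul_div_cancel' (hpl i)]
      simp only [z, Pi.smul_apply, smul_eq_mul, LinearMap.mulRight_apply, Pi.mul_apply, ← hdiv]
      ring
    · simp [z, hsupp e he]
  obtain ⟨c, -, hcz⟩ := hsat p hp z
    (hpz ▸ Submodule.mem_map_of_mem (G.boundary_eq_zero_of_isCircuitVector hx))
  set e₀ := ed ⟨0, hcirc.1⟩
  have hdvd : l e₀ ∣ l e₀ / p := by
    have : (l e₀ : ℤ) ∣ z e₀ := ⟨c e₀, by rw [← hcz]; simp [mul_comm]⟩
    have hz : (z e₀).natAbs = l e₀ / p := by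
      rcases hunit ⟨0, hcirc.1⟩ with h | h <;>
        simp only [z, e₀, h, one_mul, neg_one_mul, Int.natAbs_neg, Int.natAbs_natCast]
    simpa [hz] using Int.natAbs_dvd_natAbs.mpr this
  have hpos : 0 < l e₀ / p := Nat.div_pos (Nat.le_of_dvd (hl e₀) (hpl _)) hp.pos
  exact absurd (Nat.le_of_dvd hpos hdvd) (not_le.mpr (Nat.div_lt_self (hl e₀) hp.one_lt))

lemma mem_of_prime_smul_mem [Finite V] {l : E → ℕ} (hl : G.CircuitCoprime l) {p : ℕ}
    (hp : p.Prime) {z : E → ℤ} (h : (p : ℤ) • z ∈ G.labelledFlows l) :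
    z ∈ G.labelledFlows l := by
  obtain ⟨c, hc, hcz⟩ := h
  have hcz' : ∀ e, c e * l e = p * z e := fun e => congrFun hcz e
  have hdvd : ∀ e, (p : ℤ) ∣ c e := by
    by_contra! ⟨e₀, he₀⟩
    obtain ⟨m, v, ed, hcirc, hnd⟩ := G.exists_isCircuit_not_dvd hc p he₀
    have hpgcd : p ∣ Finset.univ.gcd fun i : Fin m => l (ed i) :=
      Finset.dvd_gcd fun i _ => Int.natCast_dvd_natCast.mp
        (((Nat.prime_iff_prime_int.mp hp).dvd_or_dvd ⟨z _, hcz' (ed i)⟩).resolve_left (hnd i))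
    rw [hl m v ed hcirc] at hpgcd
    exact hp.one_lt.ne' (Nat.dvd_one.mp hpgcd)
  choose c' hc' using hdvd
  have hp0 : (p : ℤ) ≠ 0 := by exact_mod_cast hp.ne_zero
  have hcc' : c = (p : ℤ) • c' := funext hc'
  refine ⟨c', ?_, funext fun e => mul_left_cancel₀ hp0 ?_⟩
  · have hbd : (p : ℤ) • G.boundary c' = 0 := by rw [← map_smul, ← hcc', LinearMap.mem_ker.mp hc]
    exact (smul_eq_zero.mp hbd).resolve_left hp0
  · simp only [LinearMap.mulRight_apply, Pi.mul_apply, ← hcz' e, hc' e]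
    ring

end Boundary

end Multigraph

theorem statement7_general {V E : Type*} [Fintype V] [Fintype E]
    (G : Multigraph V E)
    (l : E → ℕ) (hl : ∀ e, 1 ≤ l e) :
    Submodule.torsion ℤ
        ((E → ℤ) ⧸ Submodule.span ℤ
          {y : E → ℤ | ∃ x : E → ℤ, G.IsCircuitVector x ∧ y = fun e => x e * (l e : ℤ)}) = ⊥
      ↔ G.CircuitCoprime l := by
  classical
  rw [G.span_labelled_eq_labelledFlows l, torsion_quotient_int_eq_bot_iff]
  exact ⟨G.circuitCoprime_of_prime_smul_mem hl, fun hc p hp _ => G.mem_of_prime_smul_mem hc hp⟩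

/-- Let `(G,l)` be a finite connected graph with edge labels in
`ℤ_{≥1}`.  The Smith normal form of the labelled circuit matrix `M_{(G,l)}` (whose rows
are the labelled circuit vectors) has all of its (`r` many) nonzero diagonal entries
equal to `1` if and only if `(G,l)` is circuit-coprime.  Invariantly: the quotient of
`ℤ^E` by the row space of `M_{(G,l)}` is torsion-free iff `(G,l)` is circuit-coprime. -/
theorem statement7 {V E : Type*} [Fintype V] [Fintype E]
    (G : Multigraph V E) (hG : G.Connected)
    (l : E → ℕ) (hl : ∀ e, 1 ≤ l e) :
    Submodule.torsion ℤ
        ((E → ℤ) ⧸ Submodule.span ℤ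
          {y : E → ℤ | ∃ x : E → ℤ, G.IsCircuitVector x ∧ y = fun e => x e * (l e : ℤ)}) = ⊥
      ↔ G.CircuitCoprime l :=
  statement7_general G l hl
end

section
/- Let A = R̂[[x,y]]/(xy − t^N) where R̂ is a complete discrete valuation ring with uniformizer t and N ∈ ℤ_{≥1}, and let Y_w ⊂ Spec A be the Weil divisor defined by the ideal (x,t). Then for M ∈ ℤ, the Weil divisor M·Y_w is Cartier (i.e., its ideal sheaf is locally principal) if and only if N divides M; moreover div(x) = N·Y_w. -/
/-!
The prime `P = (x, t)` is the kernel of the reduction `A → (R ⧸ t)⟦y⟧` to the branch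
`x = 0`, and `y ∉ P`. Since `x y = t ^ N`, in `A_P` we have `x = t ^ N y⁻¹`, so `P A_P = t A_P`
and `P^(m) = {a | s a ∈ (t ^ m) for some s ∉ P}`. Now `t` is a nonzerodivisor and `(x)` is
`P`-primary (modulo `x`, `A` is `R⟦y⟧ ⧸ (t ^ N)`, where elements outside `P` are prime to
`t`); hence `P^(N k) = (x ^ k)` and `x ^ k ∉ P^(N k + 1)`. If `P^(N k + r) = (f)` with `0 < r < N`,
then `f = x ^ k g` where `g` divides both `x` and `t ^ r`. Reducing to the other branch
`(R ⧸ t)⟦x⟧` shows that such a `g` is a unit, so `x ^ k ∈ P^(N k + r)`, a contradiction.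
-/

universe u

namespace Statement17

/-- The completed local ring `A = R̂⟦x,y⟧/(xy - t^N)` of a nodal curve at a split node of
thickness `N` (here `R` is a complete discrete valuation ring with uniformizer `t`). -/
abbrev A (R : Type u) [CommRing R] (t : R) (N : ℕ) : Type u :=
  MvPowerSeries (Fin 2) R ⧸ Ideal.span
    {MvPowerSeries.X (0 : Fin 2) * MvPowerSeries.X (1 : Fin 2) -
      MvPowerSeries.C (σ := Fin 2) (R := R) (t ^ N)}

/-- The element `x ∈ A`. -/
noncomputable def xel (R : Type u) [CommRing R] (t : R) (N : ℕ) : A R t N :=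
  Ideal.Quotient.mk _ (MvPowerSeries.X (0 : Fin 2))

/-- The height-one prime `P = (x, t)` of `A`, corresponding to the Weil divisor
`Y_w ⊂ Spec A` (one of the two branches of the special fibre). -/
noncomputable def P (R : Type u) [CommRing R] (t : R) (N : ℕ) : Ideal (A R t N) :=
  Ideal.span {xel R t N, Ideal.Quotient.mk _ (MvPowerSeries.C (σ := Fin 2) (R := R) t)}

/-- The divisorial ideal of the Weil divisor `M·Y_w`, i.e. the `M`-th symbolic power
`P^{(M)} = (P^M A_P) ∩ A` of `P`. -/
noncomputable def symb (R : Type u) [CommRing R] (t : R) (N : ℕ)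
    (hP : (P R t N).IsPrime) (M : ℕ) : Ideal (A R t N) :=
  Ideal.comap
    (algebraMap (A R t N) (Localization (@Ideal.primeCompl _ _ (P R t N) hP)))
    ((Ideal.map
      (algebraMap (A R t N) (Localization (@Ideal.primeCompl _ _ (P R t N) hP)))
      (P R t N)) ^ M)

end Statement17

namespace MvPowerSeries

variable {σ R : Type*} [CommRing R]

theorem C_dvd_iff_forall_dvd_coeff {p : R} {F : MvPowerSeries σ R} :
    C p ∣ F ↔ ∀ m, p ∣ coeff m F := by
  refine ⟨fun ⟨G, hG⟩ m => ⟨coeff m G, by rw [hG, coeff_C_mul]⟩, fun h => ?_⟩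
  choose G hG using h
  exact ⟨G, ext fun m => (hG m).trans (coeff_C_mul m G p).symm⟩

theorem C_dvd_iff_map_eq_zero {p : R} {F : MvPowerSeries σ R} :
    C p ∣ F ↔ map (Ideal.Quotient.mk (Ideal.span {p})) F = 0 := by
  simp only [C_dvd_iff_forall_dvd_coeff, MvPowerSeries.ext_iff, coeff_map, map_zero,
    Ideal.Quotient.eq_zero_iff_mem, Ideal.mem_span_singleton]

theorem prime_C [IsDomain R] {p : R} (hp : Prime p) : Prime (C (σ := σ) p) := by
  have := Ideal.isPrime_span_singleton_of_prime hp
  have : IsDomain (MvPowerSeries σ (R ⧸ Ideal.span {p})) := NoZeroDivisors.to_isDomain _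
  have hker :
      Ideal.span {C p} = RingHom.ker (map (σ := σ) (Ideal.Quotient.mk (Ideal.span {p}))) := by
    ext F
    rw [Ideal.mem_span_singleton, RingHom.mem_ker, C_dvd_iff_map_eq_zero]
  refine (Ideal.span_singleton_prime fun h => hp.ne_zero ?_).mp (hker ▸ RingHom.ker_isPrime _)
  simpa using congrArg constantCoeff h

/-- `F` with every variable other than `X i` set to `0`, as a power series in `X i`. -/
noncomputable def restrictVar (i : σ) : MvPowerSeries σ R →+* PowerSeries R :=
  (killCompl (Function.Embedding.punit i)).toRingHom

@[simp]
theorem coeff_restrictVar (i : σ) (F : MvPowerSeries σ R) (n : ℕ) :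
    PowerSeries.coeff n (restrictVar i F) = coeff (Finsupp.single i n) F :=
  (coeff_killCompl F (Finsupp.single () n)).trans (by rw [Finsupp.embDomain_single]; rfl)

@[simp]
theorem restrictVar_C (i : σ) (a : R) : restrictVar i (C a) = PowerSeries.C a :=
  killCompl_C a

@[simp]
theorem restrictVar_X_self (i : σ) : restrictVar i (X i) = (PowerSeries.X : PowerSeries R) :=
  killCompl_X (e := Function.Embedding.punit i) ()

theorem restrictVar_X_of_ne {i j : σ} (h : j ≠ i) : restrictVar i (X j) = (0 : PowerSeries R) :=
  killCompl_X_eq_zero fun ⟨_, hj⟩ => h hj.symm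

theorem mem_span_X_zero_C_of_C_dvd_restrictVar_one {p : R} {F : MvPowerSeries (Fin 2) R}
    (h : PowerSeries.C p ∣ restrictVar 1 F) : F ∈ Ideal.span {X 0, C p} := by
  obtain ⟨H, hH⟩ := h
  -- `E` is `H` placed in the variable `X 1`, so `F - C p * E` has no monomial free of `X 0`.
  let E : MvPowerSeries (Fin 2) R := fun m => if m 0 = 0 then PowerSeries.coeff (m 1) H else 0
  obtain ⟨G, hG⟩ : X 0 ∣ F - C p * E := by
    refine X_dvd_iff.mpr fun m hm => ?_
    have hm' : m = Finsupp.single 1 (m 1) := by ext j; fin_cases j <;> simp [hm]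
    have hE : coeff m E = PowerSeries.coeff (m 1) H := if_pos hm
    rw [map_sub, coeff_C_mul, hE, hm', ← coeff_restrictVar, hH, PowerSeries.coeff_C_mul,
      Finsupp.single_eq_same, sub_self]
  exact Ideal.mem_span_pair.mpr ⟨G, E, by rw [mul_comm G, mul_comm E, ← hG]; ring⟩

end MvPowerSeries

namespace PowerSeries

variable {R : Type*} [CommRing R]

theorem C_dvd_iff_map_eq_zero {p : R} {F : PowerSeries R} :
    C p ∣ F ↔ map (Ideal.Quotient.mk (Ideal.span {p})) F = 0 :=
  MvPowerSeries.C_dvd_iff_map_eq_zero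

theorem prime_C [IsDomain R] {p : R} (hp : Prime p) : Prime (C p) :=
  MvPowerSeries.prime_C hp

theorem constantCoeff_ne_zero_or_of_mul_eq_X [Nontrivial R] {f g : PowerSeries R} (h : f * g = X) :
    constantCoeff f ≠ 0 ∨ constantCoeff g ≠ 0 := by
  by_contra! hfg
  obtain ⟨f', rfl⟩ := X_dvd_iff.mpr hfg.1
  obtain ⟨g', rfl⟩ := X_dvd_iff.mpr hfg.2
  have := (X_pow_dvd_iff (φ := (X : PowerSeries R))).mp ⟨f' * g', by linear_combination -h⟩ 1
    one_lt_two
  simp at this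

end PowerSeries

namespace Statement17

open MvPowerSeries

section CommRing

variable {R : Type u} [CommRing R] {t : R} {N : ℕ}

variable (R t N) in
noncomputable def yel : A R t N :=
  Ideal.Quotient.mk _ (X (1 : Fin 2))

variable (R t N) in
noncomputable def tel : A R t N :=
  Ideal.Quotient.mk _ (C t)

theorem P_eq : P R t N = Ideal.span {xel R t N, tel R t N} := rfl

theorem xel_mem_P : xel R t N ∈ P R t N :=
  Ideal.subset_span (Set.mem_insert _ _)

theorem tel_mem_P : tel R t N ∈ P R t N :=
  Ideal.subset_span (Set.mem_insert_of_mem _ rfl)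

theorem xel_mul_yel : xel R t N * yel R t N = tel R t N ^ N := by
  rw [xel, yel, tel, ← map_mul, ← map_pow, ← map_pow, Ideal.Quotient.eq]
  exact Ideal.subset_span rfl

theorem mk_C_pow (j : ℕ) :
    (Ideal.Quotient.mk _ (C (t ^ j)) : A R t N) = tel R t N ^ j := by
  rw [tel, ← map_pow, ← map_pow]

theorem not_C_dvd_relation (ht : ¬IsUnit t) :
    ¬ C t ∣ (X 0 * X 1 - C (t ^ N) : MvPowerSeries (Fin 2) R) := by
  rw [C_dvd_iff_forall_dvd_coeff]
  intro h
  have := h (Finsupp.single 0 1 + Finsupp.single 1 1)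
  rw [map_sub, X_def, X_def, monomial_mul_monomial, coeff_monomial_same, coeff_C,
    if_neg (by simp), sub_zero, mul_one] at this
  exact ht (isUnit_of_dvd_one this)

variable (t) in
/-- Restriction to the branch `x = 0` (for `i = 1`) or `y = 0` (for `i = 0`) of the special
fibre `(R ⧸ t)⟦x, y⟧ ⧸ (x y)`. -/
noncomputable def toBranch (hN : N ≠ 0) (i : Fin 2) :
    A R t N →+* PowerSeries (R ⧸ Ideal.span {t}) :=
  Ideal.Quotient.lift _ ((PowerSeries.map (Ideal.Quotient.mk _)).comp (restrictVar i)) <| by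
    intro F hF
    obtain ⟨D, rfl⟩ := Ideal.mem_span_singleton'.mp hF
    fin_cases i <;> simp [restrictVar_X_of_ne, hN]

theorem toBranch_mk (hN : N ≠ 0) (i : Fin 2) (F : MvPowerSeries (Fin 2) R) :
    toBranch t hN i (Ideal.Quotient.mk _ F) =
      PowerSeries.map (Ideal.Quotient.mk _) (restrictVar i F) :=
  Ideal.Quotient.lift_mk _ _ _

theorem toBranch_tel (hN : N ≠ 0) (i : Fin 2) : toBranch t hN i (tel R t N) = 0 := by
  rw [tel, toBranch_mk, restrictVar_C, PowerSeries.map_C,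
    Ideal.Quotient.eq_zero_iff_mem.mpr (Ideal.mem_span_singleton_self t), map_zero]

theorem toBranch_zero_xel (hN : N ≠ 0) : toBranch t hN 0 (xel R t N) = PowerSeries.X := by
  rw [xel, toBranch_mk, restrictVar_X_self, PowerSeries.map_X]

theorem toBranch_one_xel (hN : N ≠ 0) : toBranch t hN 1 (xel R t N) = 0 := by
  rw [xel, toBranch_mk, restrictVar_X_of_ne (by decide), map_zero]

theorem toBranch_one_yel (hN : N ≠ 0) : toBranch t hN 1 (yel R t N) = PowerSeries.X := by
  rw [yel, toBranch_mk, restrictVar_X_self, PowerSeries.map_X]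

theorem ker_toBranch_one (hN : N ≠ 0) : RingHom.ker (toBranch t hN 1) = P R t N := by
  refine le_antisymm (fun a ha => ?_) ?_
  · obtain ⟨F, rfl⟩ := Ideal.Quotient.mk_surjective a
    rw [RingHom.mem_ker, toBranch_mk, ← PowerSeries.C_dvd_iff_map_eq_zero] at ha
    obtain ⟨G, H, hF⟩ := Ideal.mem_span_pair.mp (mem_span_X_zero_C_of_C_dvd_restrictVar_one ha)
    exact Ideal.mem_span_pair.mpr ⟨_, _, by rw [← hF, map_add, map_mul, map_mul]; rfl⟩
  · rw [P_eq, Ideal.span_le]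
    rintro _ (rfl | rfl)
    · exact toBranch_one_xel hN
    · exact toBranch_tel hN 1

theorem isPrime_P (ht : Prime t) (hN : N ≠ 0) : (P R t N).IsPrime := by
  have := Ideal.isPrime_span_singleton_of_prime ht
  rw [← ker_toBranch_one hN]
  exact RingHom.ker_isPrime _

theorem yel_notMem_P (ht : Prime t) (hN : N ≠ 0) : yel R t N ∉ P R t N := by
  have := Ideal.isPrime_span_singleton_of_prime ht
  rw [← ker_toBranch_one hN, RingHom.mem_ker, toBranch_one_yel]
  exact PowerSeries.X_ne_zero

theorem P_le_radical_span_xel : P R t N ≤ (Ideal.span {xel R t N}).radical := by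
  rw [P_eq, Ideal.span_le]
  rintro _ (rfl | rfl)
  · exact Ideal.le_radical (Ideal.mem_span_singleton_self _)
  · exact ⟨N, Ideal.mem_span_singleton.mpr ⟨yel R t N, xel_mul_yel.symm⟩⟩

end CommRing

section Domain

variable {R : Type u} [CommRing R] [IsDomain R] {t : R} {N : ℕ}

theorem tel_mem_nonZeroDivisors (ht : Prime t) : tel R t N ∈ nonZeroDivisors (A R t N) := by
  refine mem_nonZeroDivisors_iff_left.mpr fun z hz => ?_
  obtain ⟨F, rfl⟩ := Ideal.Quotient.mk_surjective z
  rw [tel, ← map_mul, Ideal.Quotient.eq_zero_iff_mem, Ideal.mem_span_singleton'] at hz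
  obtain ⟨D, hD⟩ := hz
  obtain ⟨D', rfl⟩ := ((prime_C ht).dvd_or_dvd ⟨F, hD⟩).resolve_right
    (not_C_dvd_relation ht.not_isUnit)
  have hF : F = D' * (X 0 * X 1 - C (t ^ N)) :=
    mul_left_cancel₀ (prime_C ht).ne_zero (by rw [← hD]; ring)
  rw [Ideal.Quotient.eq_zero_iff_mem, Ideal.mem_span_singleton']
  exact ⟨D', hF.symm⟩

theorem xel_mem_nonZeroDivisors (ht : Prime t) : xel R t N ∈ nonZeroDivisors (A R t N) :=
  (mul_mem_nonZeroDivisors.mp (xel_mul_yel (R := R) ▸ pow_mem (tel_mem_nonZeroDivisors ht) N)).1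

theorem tel_pow_mul_cancel (ht : Prime t) (j : ℕ) {a b : A R t N}
    (h : tel R t N ^ j * a = tel R t N ^ j * b) : a = b :=
  (mul_cancel_left_mem_nonZeroDivisors (pow_mem (tel_mem_nonZeroDivisors ht) j)).mp h

theorem xel_pow_mul_cancel (ht : Prime t) (k : ℕ) {a b : A R t N}
    (h : xel R t N ^ k * a = xel R t N ^ k * b) : a = b :=
  (mul_cancel_left_mem_nonZeroDivisors (pow_mem (xel_mem_nonZeroDivisors ht) k)).mp h

theorem mem_span_xel_of_mul_mem (ht : Prime t) (hN : N ≠ 0) {s a : A R t N}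
    (hs : s ∉ P R t N) (h : s * a ∈ Ideal.span {xel R t N}) : a ∈ Ideal.span {xel R t N} := by
  obtain ⟨S, rfl⟩ := Ideal.Quotient.mk_surjective s
  obtain ⟨F, rfl⟩ := Ideal.Quotient.mk_surjective a
  obtain ⟨c, hc⟩ := Ideal.mem_span_singleton'.mp h
  obtain ⟨G, rfl⟩ := Ideal.Quotient.mk_surjective c
  rw [xel, ← map_mul, ← map_mul, Ideal.Quotient.eq, Ideal.mem_span_singleton'] at hc
  obtain ⟨D, hD⟩ := hc
  -- Modulo `x` we are in `R⟦y⟧ ⧸ (t ^ N)`, where the image of `s` is prime to `t`.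
  have hS : ¬ PowerSeries.C t ∣ restrictVar 1 S := by
    rwa [PowerSeries.C_dvd_iff_map_eq_zero, ← toBranch_mk (t := t) hN, ← RingHom.mem_ker,
      ker_toBranch_one]
  have hSF : PowerSeries.C t ^ N ∣ restrictVar 1 S * restrictVar 1 F :=
    ⟨restrictVar 1 D, by
      have := congrArg (restrictVar 1) hD
      simp only [map_mul, map_sub, restrictVar_X_of_ne (show (0 : Fin 2) ≠ 1 by decide),
        restrictVar_C, map_pow] at this
      linear_combination this⟩
  have hF := mem_span_X_zero_C_of_C_dvd_restrictVar_one (p := t ^ N)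
    (by rw [map_pow]; exact (PowerSeries.prime_C ht).pow_dvd_of_dvd_mul_left N hS hSF)
  obtain ⟨G₁, G₂, hG⟩ := Ideal.mem_span_pair.mp hF
  refine Ideal.mem_span_singleton'.mpr
    ⟨Ideal.Quotient.mk _ G₁ + Ideal.Quotient.mk _ G₂ * yel R t N, ?_⟩
  rw [← hG, map_add, map_mul, map_mul, mk_C_pow, ← xel_mul_yel, xel]
  ring

theorem mem_span_xel_pow_of_mul_mem (ht : Prime t) (hN : N ≠ 0) {s : A R t N}
    (hs : s ∉ P R t N) (k : ℕ) {a : A R t N} (h : s * a ∈ Ideal.span {xel R t N ^ k}) :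
    a ∈ Ideal.span {xel R t N ^ k} := by
  induction k generalizing a with
  | zero => simp
  | succ k ih =>
    have hx : s * a ∈ Ideal.span {xel R t N} :=
      Ideal.span_singleton_le_span_singleton.mpr (dvd_pow_self _ k.succ_ne_zero) h
    obtain ⟨a₁, rfl⟩ := Ideal.mem_span_singleton.mp (mem_span_xel_of_mul_mem ht hN hs hx)
    obtain ⟨c, hc⟩ := Ideal.mem_span_singleton.mp h
    have : s * a₁ ∈ Ideal.span {xel R t N ^ k} := Ideal.mem_span_singleton.mpr
      ⟨c, xel_pow_mul_cancel ht 1 (by linear_combination hc)⟩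
    obtain ⟨d, rfl⟩ := Ideal.mem_span_singleton.mp (ih this)
    exact Ideal.mem_span_singleton.mpr ⟨d, by ring⟩

theorem isPrimary_span_xel (ht : Prime t) (hN : N ≠ 0) : (Ideal.span {xel R t N}).IsPrimary := by
  refine Ideal.isPrimary_iff.mpr ⟨ne_top_of_le_ne_top (isPrime_P ht hN).ne_top
    ((Ideal.span_singleton_le_iff_mem _).mpr xel_mem_P), fun {a b} hab => ?_⟩
  by_cases hb : b ∈ P R t N
  · exact Or.inr (P_le_radical_span_xel hb)
  · exact Or.inl (mem_span_xel_of_mul_mem ht hN hb (mul_comm a b ▸ hab))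

theorem minimalPrimes_span_xel (ht : Prime t) (hN : N ≠ 0) :
    (Ideal.span {xel R t N}).minimalPrimes = {P R t N} := by
  rw [Ideal.minimalPrimes_eq_subsingleton (isPrimary_span_xel ht hN)]
  refine congrArg _ (le_antisymm ?_ P_le_radical_span_xel)
  exact (isPrime_P ht hN).radical_le_iff.mpr ((Ideal.span_singleton_le_iff_mem _).mpr xel_mem_P)

theorem not_xel_dvd_tel_pow (ht : Prime t) (hN : N ≠ 0) {r : ℕ} (hr : r < N) :
    ¬ xel R t N ∣ tel R t N ^ r := by
  rintro ⟨c, hc⟩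
  refine yel_notMem_P ht hN ?_
  have hN' : tel R t N ^ N = tel R t N ^ r * (tel R t N * tel R t N ^ (N - r - 1)) := by
    rw [← pow_succ', ← pow_add]
    congr 1
    omega
  have hy : yel R t N = tel R t N * (tel R t N ^ (N - r - 1) * c) := tel_pow_mul_cancel ht r
    (by linear_combination yel R t N * hc + c * xel_mul_yel (R := R) + c * hN')
  rw [hy]
  exact Ideal.mul_mem_right _ _ tel_mem_P

end Domain

section Local

variable {R : Type u} [CommRing R] [IsLocalRing R] {t : R} {N : ℕ}

theorem isUnit_of_constantCoeff_toBranch_ne_zero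
    (hmax : IsLocalRing.maximalIdeal R = Ideal.span {t}) (hN : N ≠ 0) (i : Fin 2) {a : A R t N}
    (h : PowerSeries.constantCoeff (toBranch t hN i a) ≠ 0) : IsUnit a := by
  obtain ⟨F, rfl⟩ := Ideal.Quotient.mk_surjective a
  have hF : constantCoeff F ∉ IsLocalRing.maximalIdeal R := by
    rw [hmax]
    contrapose! h
    rw [toBranch_mk, ← PowerSeries.coeff_zero_eq_constantCoeff_apply, PowerSeries.coeff_map,
      coeff_restrictVar, Finsupp.single_zero, coeff_zero_eq_constantCoeff_apply,
      Ideal.Quotient.eq_zero_iff_mem]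
    exact h
  exact (isUnit_iff_constantCoeff.mpr (IsLocalRing.notMem_maximalIdeal.mp hF)).map _

theorem isUnit_of_dvd_xel_of_dvd_tel_pow [IsDomain R] (ht : Prime t)
    (hmax : IsLocalRing.maximalIdeal R = Ideal.span {t}) (hN : N ≠ 0) {r : ℕ} (hr : r < N)
    {g : A R t N} (hx : g ∣ xel R t N) (htr : g ∣ tel R t N ^ r) : IsUnit g := by
  have := Ideal.isPrime_span_singleton_of_prime ht
  obtain ⟨w, hw⟩ := hx
  -- On the branch `y = 0`, `x = g w` becomes `X = ḡ w̄`, so `g` or `w` is a unit.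
  have hX := congrArg (toBranch t hN 0) hw
  rw [toBranch_zero_xel, map_mul] at hX
  rcases PowerSeries.constantCoeff_ne_zero_or_of_mul_eq_X hX.symm with hg | hw'
  · exact isUnit_of_constantCoeff_toBranch_ne_zero hmax hN 0 hg
  · obtain ⟨u, rfl⟩ := isUnit_of_constantCoeff_toBranch_ne_zero hmax hN 0 hw'
    have hxg : xel R t N ∣ g := ⟨↑u⁻¹, by rw [hw, mul_assoc, Units.mul_inv, mul_one]⟩
    exact absurd (hxg.trans htr) (not_xel_dvd_tel_pow ht hN hr)

end Local

section SymbolicPower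

variable {R : Type u} [CommRing R] {t : R} {N : ℕ} (hP : (P R t N).IsPrime)

theorem symb_antitone : Antitone (symb R t N hP) :=
  fun _ _ h => Ideal.comap_mono (Ideal.pow_le_pow_right h)

theorem mem_symb_iff (ht : Prime t) (hN : N ≠ 0) (m : ℕ) {a : A R t N} :
    a ∈ symb R t N hP m ↔ ∃ s ∉ P R t N, s * a ∈ Ideal.span {tel R t N ^ m} := by
  have := hP
  have hmem := IsLocalization.algebraMap_mem_map_algebraMap_iff
    (P R t N).primeCompl (Localization.AtPrime (P R t N))
  -- `x = t ^ N * y⁻¹` in the localization, so `P` and `t` generate the same ideal there.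
  have hmap : (P R t N).map (algebraMap _ (Localization.AtPrime (P R t N))) =
      (Ideal.span {tel R t N}).map (algebraMap _ _) := by
    refine le_antisymm (Ideal.map_le_iff_le_comap.mpr (Ideal.span_le.mpr ?_))
      (Ideal.map_mono ((Ideal.span_singleton_le_iff_mem _).mpr tel_mem_P))
    rintro _ (rfl | rfl)
    · refine (hmem _ _).mpr ⟨yel R t N, yel_notMem_P ht hN, Ideal.mem_span_singleton.mpr
        ⟨tel R t N ^ (N - 1), ?_⟩⟩
      rw [mul_comm, xel_mul_yel, ← pow_succ', Nat.sub_add_cancel (Nat.one_le_iff_ne_zero.mpr hN)]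
    · exact Ideal.mem_comap.mpr (Ideal.mem_map_of_mem _ (Ideal.mem_span_singleton_self _))
  rw [symb, Ideal.mem_comap, hmap, ← Ideal.map_pow, Ideal.span_singleton_pow, hmem]
  rfl

theorem xel_pow_mul_tel_pow_mem_symb (ht : Prime t) (hN : N ≠ 0) {k j m : ℕ}
    (hm : m ≤ N * k + j) : xel R t N ^ k * tel R t N ^ j ∈ symb R t N hP m := by
  refine (mem_symb_iff hP ht hN m).mpr ⟨yel R t N ^ k,
    fun h => yel_notMem_P ht hN (hP.mem_of_pow_mem k h), Ideal.mem_span_singleton.mpr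
    ⟨tel R t N ^ (N * k + j - m), ?_⟩⟩
  rw [← mul_assoc, ← mul_pow, mul_comm (yel R t N), xel_mul_yel, ← pow_mul, ← pow_add,
    ← pow_add, Nat.add_sub_cancel' hm]

theorem xel_pow_notMem_symb [IsDomain R] (ht : Prime t) (hN : N ≠ 0) (k : ℕ) :
    xel R t N ^ k ∉ symb R t N hP (N * k + 1) := by
  intro h
  obtain ⟨s, hs, hsx⟩ := (mem_symb_iff hP ht hN _).mp h
  obtain ⟨c, hc⟩ := Ideal.mem_span_singleton.mp hsx
  have hxy : xel R t N ^ k * yel R t N ^ k = tel R t N ^ (N * k) := by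
    rw [← mul_pow, xel_mul_yel, ← pow_mul]
  have hst : s = tel R t N * (c * yel R t N ^ k) :=
    tel_pow_mul_cancel ht (N * k) (by linear_combination yel R t N ^ k * hc - s * hxy)
  exact hs (hst ▸ Ideal.mul_mem_right _ _ tel_mem_P)

theorem symb_mul_eq_span_xel_pow [IsDomain R] (ht : Prime t) (hN : N ≠ 0) (k : ℕ) :
    symb R t N hP (N * k) = Ideal.span {xel R t N ^ k} := by
  refine le_antisymm (fun a ha => ?_) ((Ideal.span_singleton_le_iff_mem _).mpr ?_)
  · obtain ⟨s, hs, hsa⟩ := (mem_symb_iff hP ht hN _).mp ha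
    refine mem_span_xel_pow_of_mul_mem ht hN hs k ?_
    rw [pow_mul, ← xel_mul_yel, mul_pow] at hsa
    exact Ideal.span_singleton_le_span_singleton.mpr (dvd_mul_right _ _) hsa
  · simpa using xel_pow_mul_tel_pow_mem_symb hP ht hN (j := 0) le_rfl

variable [IsDomain R] [IsLocalRing R]

theorem not_isPrincipal_symb (ht : Prime t) (hmax : IsLocalRing.maximalIdeal R = Ideal.span {t})
    (hN : N ≠ 0) (k : ℕ) {r : ℕ} (hr₀ : 0 < r) (hr : r < N) :
    ¬ (symb R t N hP (N * k + r)).IsPrincipal := by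
  rintro ⟨f, hf⟩
  rw [Ideal.submodule_span_eq] at hf
  have dvd_of_mem : ∀ {a}, a ∈ symb R t N hP (N * k + r) → f ∣ a :=
    fun h => Ideal.mem_span_singleton.mp (hf ▸ h)
  obtain ⟨g, hg⟩ : xel R t N ^ k ∣ f := by
    rw [← Ideal.mem_span_singleton, ← symb_mul_eq_span_xel_pow hP ht hN]
    exact symb_antitone hP (Nat.le_add_right _ _) (hf ▸ Ideal.mem_span_singleton_self f)
  have hgx : g ∣ xel R t N := by
    obtain ⟨w, hw⟩ := dvd_of_mem
      (xel_pow_mul_tel_pow_mem_symb hP ht hN (k := k + 1) (j := 0) (by rw [Nat.mul_succ]; omega))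
    exact ⟨w, xel_pow_mul_cancel ht k (by rw [← mul_assoc, ← hg, ← hw]; ring)⟩
  have hgt : g ∣ tel R t N ^ r := by
    obtain ⟨u, hu⟩ := dvd_of_mem (xel_pow_mul_tel_pow_mem_symb hP ht hN (k := k) le_rfl)
    exact ⟨u, xel_pow_mul_cancel ht k (by rw [← mul_assoc, ← hg, ← hu])⟩
  obtain ⟨u, rfl⟩ := isUnit_of_dvd_xel_of_dvd_tel_pow ht hmax hN hr hgx hgt
  refine xel_pow_notMem_symb hP ht hN k (symb_antitone hP (by omega : N * k + 1 ≤ N * k + r) ?_)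
  rw [hf, hg]
  exact Ideal.mem_span_singleton.mpr ⟨↑u⁻¹, by rw [mul_assoc, Units.mul_inv, mul_one]⟩

theorem symb_isPrincipal_iff (ht : Prime t) (hmax : IsLocalRing.maximalIdeal R = Ideal.span {t})
    (hN : N ≠ 0) (m : ℕ) : (symb R t N hP m).IsPrincipal ↔ N ∣ m := by
  refine ⟨fun h => ?_, ?_⟩
  · by_contra hm
    rw [← Nat.div_add_mod m N] at h
    exact not_isPrincipal_symb hP ht hmax hN _
      (Nat.pos_of_ne_zero fun h => hm (Nat.dvd_of_mod_eq_zero h))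
      (Nat.mod_lt _ (Nat.pos_of_ne_zero hN)) h
  · rintro ⟨k, rfl⟩
    exact ⟨⟨xel R t N ^ k, symb_mul_eq_span_xel_pow hP ht hN k⟩⟩

end SymbolicPower

end Statement17

open Statement17 in
theorem statement17_general (R : Type u) [CommRing R] [IsDomain R] [IsDiscreteValuationRing R]
    (t : R) (ht : Irreducible t) (N : ℕ) (hN : 1 ≤ N)
    (hP : (P R t N).IsPrime) :
    (xel R t N ∈ symb R t N hP N ∧ xel R t N ∉ symb R t N hP (N + 1) ∧
      ∀ Q ∈ (Ideal.span {xel R t N}).minimalPrimes, Q = P R t N) ∧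
    ∀ M : ℤ, (symb R t N hP M.natAbs).IsPrincipal ↔ (N : ℤ) ∣ M := by
  have htp : Prime t := ht.prime
  have hmax := (IsDiscreteValuationRing.irreducible_iff_uniformizer t).mp ht
  have hN₀ : N ≠ 0 := Nat.one_le_iff_ne_zero.mp hN
  refine ⟨⟨?_, ?_, fun Q hQ => ?_⟩, fun M => ?_⟩
  · simpa using xel_pow_mul_tel_pow_mem_symb hP htp hN₀ (k := 1) (j := 0) (by simp)
  · simpa using xel_pow_notMem_symb hP htp hN₀ 1
  · rwa [minimalPrimes_span_xel htp hN₀] at hQ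
  · rw [symb_isPrincipal_iff hP htp hmax hN₀, Int.natCast_dvd]

open Statement17 in
/-- Let `A = R̂⟦x,y⟧/(xy - t^N)`, `N ≥ 1`, where `R̂` is a complete
discrete valuation ring with uniformizer `t`, and let `Y_w ⊂ Spec A` be the Weil divisor
defined by the prime `P = (x,t)`.  Then `div(x) = N·Y_w` (that is, `x` has order exactly
`N` along `Y_w` and its divisor is supported on `Y_w` only), and for `M ∈ ℤ` the Weil
divisor `M·Y_w` is Cartier — i.e. its divisorial ideal, the symbolic power `P^{(|M|)}`,
is (locally) principal — if and only if `N` divides `M`. -/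
theorem statement17 (R : Type u) [CommRing R] [IsDomain R] [IsDiscreteValuationRing R]
    [IsAdicComplete (IsLocalRing.maximalIdeal R) R]
    (t : R) (ht : Irreducible t) (N : ℕ) (hN : 1 ≤ N)
    (hP : (P R t N).IsPrime) :
    (xel R t N ∈ symb R t N hP N ∧ xel R t N ∉ symb R t N hP (N + 1) ∧
      ∀ Q ∈ (Ideal.span {xel R t N}).minimalPrimes, Q = P R t N) ∧
    ∀ M : ℤ, (symb R t N hP M.natAbs).IsPrincipal ↔ (N : ℤ) ∣ M :=
  statement17_general R t ht N hN hP
end
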